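/- arXiv:1910.12517 — 10 statements merged into one kernel-verified Lean document; each statement's English description precedes it below -/
import Mathlib

section
/- In a category, suppose we are given objects and morphisms: i₁ : A₁ → B, i₂ : A₂ → B, parallel morphisms u, v : B → X, and morphisms e₁ : X → Y, e₂ : Y → Z such that e₂ ∘ e₁ ∘ u = e₂ ∘ e₁ ∘ v. If e₁ is a coequalizer of (u ∘ i₁, v ∘ i₁) and e₂ is a coequalizer of (e₁ ∘ u ∘ i₂, e₁ ∘ v ∘ i₂), then e₂ ∘ e₁ is a coequalizer of (u, v). -/
open CategoryTheory Limits

/-- `q` is a coequalizer of the parallel pair `(u, v)`. -/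
def IsCoeq {C : Type*} [Category C] {T X Q : C} (u v : T ⟶ X) (q : X ⟶ Q) : Prop :=
  ∃ h : u ≫ q = v ≫ q, Nonempty (IsColimit (Cofork.ofπ q h))

theorem stmt0 {C : Type*} [Category C] {A₁ A₂ B X Y Z : C}
    (i₁ : A₁ ⟶ B) (i₂ : A₂ ⟶ B) (u v : B ⟶ X) (e₁ : X ⟶ Y) (e₂ : Y ⟶ Z)
    (h : u ≫ e₁ ≫ e₂ = v ≫ e₁ ≫ e₂)
    (h₁ : IsCoeq (i₁ ≫ u) (i₁ ≫ v) e₁)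
    (h₂ : IsCoeq (i₂ ≫ u ≫ e₁) (i₂ ≫ v ≫ e₁) e₂) :
    IsCoeq u v (e₁ ≫ e₂) := by
  obtain ⟨hc₁, ⟨L₁⟩⟩ := h₁
  obtain ⟨hc₂, ⟨L₂⟩⟩ := h₂
  refine ⟨h, ⟨Cofork.IsColimit.mk' _ (fun s => ?_)⟩⟩
  have hs : u ≫ s.π = v ≫ s.π := s.condition
  -- factor s.π through e₁
  have hs₁ : (i₁ ≫ u) ≫ s.π = (i₁ ≫ v) ≫ s.π := by
    simp only [Category.assoc, hs]
  obtain ⟨m₁, hm₁⟩ := Cofork.IsColimit.desc' L₁ s.π hs₁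
  replace hm₁ : e₁ ≫ m₁ = s.π := hm₁
  have hs₂ : (i₂ ≫ u ≫ e₁) ≫ m₁ = (i₂ ≫ v ≫ e₁) ≫ m₁ := by
    simp only [Category.assoc, hm₁, hs]
  obtain ⟨m₂, hm₂⟩ := Cofork.IsColimit.desc' L₂ m₁ hs₂
  replace hm₂ : e₂ ≫ m₂ = m₁ := hm₂
  have he₁ : Epi e₁ := ⟨fun a b hab => Cofork.IsColimit.hom_ext L₁ (by simpa using hab)⟩
  have he₂ : Epi e₂ := ⟨fun a b hab => Cofork.IsColimit.hom_ext L₂ (by simpa using hab)⟩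
  refine ⟨m₂, ?_, ?_⟩
  · show (e₁ ≫ e₂) ≫ m₂ = s.π
    rw [Category.assoc, hm₂, hm₁]
  · intro m' hm'
    replace hm' : (e₁ ≫ e₂) ≫ m' = s.π := hm'
    rw [← cancel_epi e₂, ← cancel_epi e₁, ← Category.assoc, ← Category.assoc, hm']
    rw [Category.assoc, hm₂, hm₁]
end

section
/- If C is a pointed category with binary products in which the product of any two coequalizer diagrams is a coequalizer diagram (property (P)), then every product projection π₁ : X × Y → X is a normal epimorphism (a cokernel of some morphism). -/
open CategoryTheory Limits

/-- Property (P): the product of two coequalizer diagrams is a coequalizer diagram. -/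
def PropertyP (C : Type*) [Category C] [HasBinaryProducts C] : Prop :=
  ∀ {T₁ T₂ X X' Y Y' : C} (u v : T₁ ⟶ X) (u' v' : T₂ ⟶ Y) (q₁ : X ⟶ X') (q₂ : Y ⟶ Y'),
    IsCoeq u v q₁ → IsCoeq u' v' q₂ →
      IsCoeq (prod.map u u') (prod.map v v') (prod.map q₁ q₂)

/-- A normal epimorphism: a cokernel, i.e. a coequalizer of some morphism with the
zero morphism. -/
def IsNormalEpi {C : Type*} [Category C] [HasZeroMorphisms C] {X Q : C}
    (q : X ⟶ Q) : Prop :=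
  ∃ (K : C) (k : K ⟶ X), IsCoeq k 0 q

/-! The identity of `X` coequalizes `0, 0 : Y ⟶ X`, and `Y ⟶ 0` coequalizes `𝟙 Y, 0`.
By (P) their product `X ⨯ Y ⟶ X ⨯ 0 ≅ X`, which is `prod.fst`, coequalizes
`0 × 𝟙 Y` and `0 × 0 = 0`. -/

open ZeroObject

lemma isCoeq_id_of_eq {C : Type*} [Category C] {T X : C} {u v : T ⟶ X} (h : u = v) :
    IsCoeq u v (𝟙 X) :=
  ⟨by rw [h], ⟨isColimitIdCofork h⟩⟩

lemma isCoeq_id_zero_of_isZero {C : Type*} [Category C] [HasZeroMorphisms C] {Y Z : C}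
    (hZ : IsZero Z) (q : Y ⟶ Z) : IsCoeq (𝟙 Y) 0 q :=
  ⟨hZ.eq_of_tgt _ _, ⟨CokernelCofork.IsColimit.ofEpiOfIsZero _ inferInstance hZ⟩⟩

lemma IsCoeq.comp_iso {C : Type*} [Category C] {T X Q Q' : C} {u v : T ⟶ X} {q : X ⟶ Q}
    (h : IsCoeq u v q) (i : Q ≅ Q') : IsCoeq u v (q ≫ i.hom) := by
  obtain ⟨w, ⟨hq⟩⟩ := h
  exact ⟨by simp only [← Category.assoc, w], ⟨hq.ofIsoColimit (Cofork.ext i rfl)⟩⟩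

theorem stmt1 {C : Type*} [Category C] [HasZeroObject C] [HasZeroMorphisms C]
    [HasBinaryProducts C] (hP : PropertyP C) (X Y : C) :
    IsNormalEpi (prod.fst : X ⨯ Y ⟶ X) := by
  have hprod := hP (0 : Y ⟶ X) 0 (𝟙 Y) 0 (𝟙 X) (0 : Y ⟶ 0)
    (isCoeq_id_of_eq rfl) (isCoeq_id_zero_of_isZero (isZero_zero C) 0)
  refine ⟨Y ⨯ Y, prod.map 0 (𝟙 Y), ?_⟩
  have hzero : prod.map (0 : Y ⟶ X) (0 : Y ⟶ Y) = 0 := by ext <;> simp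
  have hfst : prod.map (𝟙 X) (0 : Y ⟶ 0) ≫ (prodZeroIso X).hom = prod.fst := by simp
  simpa only [hzero, hfst] using hprod.comp_iso (prodZeroIso X)
end

section
/- Let C be a category with binary products and an initial object 0. Then C satisfies property (P) (products of coequalizer diagrams are coequalizer diagrams) if and only if for every coequalizer diagram q : X → Y of (u, v : C₁ → X) and every object Z, the morphism q × 1_Z : X × Z → Y × Z is a coequalizer of (u × 0_Z, v × 0_Z), where 0_Z denotes the unique morphism from the initial object to Z (so the parallel pair has domain C₁ × 0). -/
/-!
One direction is (P) applied with `𝟙 Z`, a coequalizer of `(0_Z, 0_Z)`. For the other, factor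
`q₁ × q₂ = (q₁ × 1) ≫ (1 × q₂)`. By hypothesis, and up to the braiding, the two factors coequalize
`(u × 0, v × 0)` and `(0 × u', 0 × v')`; since these pairs are pulled back from `(u × u', v × v')`
along `1 × 0 : T₁ × 0 ⟶ T₁ × T₂` and `0 × 1 : 0 × T₂ ⟶ T₁ × T₂`, a map coequalizing
`(u × u', v × v')` descends along both factors in turn.
-/

open CategoryTheory Limits

namespace IsCoeq

variable {C : Type*} [Category C]

lemma epi {T X Q : C} {u v : T ⟶ X} {q : X ⟶ Q} (h : IsCoeq u v q) : Epi q :=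
  let ⟨_, ⟨hc⟩⟩ := h
  Cofork.IsColimit.epi hc

lemma exists_comp_eq {T X Q W : C} {u v : T ⟶ X} {q : X ⟶ Q} (h : IsCoeq u v q) {f : X ⟶ W}
    (hf : u ≫ f = v ≫ f) : ∃ g, q ≫ g = f :=
  let ⟨_, ⟨hc⟩⟩ := h
  ⟨_, (Cofork.IsColimit.desc' hc f hf).2⟩

lemma of_epi {T X Q : C} {u v : T ⟶ X} {q : X ⟶ Q} [Epi q] (hq : u ≫ q = v ≫ q)
    (hfac : ∀ {W : C} (f : X ⟶ W), u ≫ f = v ≫ f → ∃ g, q ≫ g = f) : IsCoeq u v q := by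
  refine ⟨hq, ⟨Cofork.IsColimit.ofExistsUnique fun s => ?_⟩⟩
  obtain ⟨g, hg⟩ := hfac s.π s.condition
  exact ⟨g, hg, fun m hm => (cancel_epi q).1 (hm.trans hg.symm)⟩

lemma id_self {T Z : C} (f : T ⟶ Z) : IsCoeq f f (𝟙 Z) :=
  of_epi rfl fun g _ => ⟨g, Category.id_comp g⟩

lemma comp {T S₁ S₂ X Y Z : C} {u v : T ⟶ X} {p : X ⟶ Y} {r : Y ⟶ Z}
    {a b : S₁ ⟶ X} {c d : S₂ ⟶ Y} (hp : IsCoeq a b p) (hr : IsCoeq c d r)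
    (i : S₁ ⟶ T) (ha : i ≫ u = a) (hb : i ≫ v = b)
    (j : S₂ ⟶ T) (hc : j ≫ u ≫ p = c) (hd : j ≫ v ≫ p = d)
    (huv : u ≫ p ≫ r = v ≫ p ≫ r) : IsCoeq u v (p ≫ r) := by
  have := hp.epi
  have := hr.epi
  refine of_epi (by simpa using huv) fun f hf => ?_
  obtain ⟨g, rfl⟩ := hp.exists_comp_eq (f := f) (by simp only [← ha, ← hb, Category.assoc, hf])
  obtain ⟨k, rfl⟩ := hr.exists_comp_eq (f := g)
    (by simp only [← hc, ← hd, Category.assoc, hf])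
  exact ⟨k, Category.assoc _ _ _⟩

variable [HasBinaryProducts C]

lemma prod_map_swap {T₁ T₂ X Y X' Y' : C} {a c : T₁ ⟶ X} {b d : T₂ ⟶ Y} {f : X ⟶ X'}
    {g : Y ⟶ Y'} (h : IsCoeq (prod.map a b) (prod.map c d) (prod.map f g)) :
    IsCoeq (prod.map b a) (prod.map d c) (prod.map g f) := by
  have swap : ∀ {P Q P' Q' : C} (k : P ⟶ P') (l : Q ⟶ Q'),
      prod.map l k = (prod.braiding P Q).inv ≫ prod.map k l ≫ (prod.braiding P' Q').hom :=
    fun k l => by rw [braid_natural, Iso.inv_hom_id_assoc]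
  obtain ⟨w, ⟨hc⟩⟩ := h
  have w' : prod.map b a ≫ prod.map g f = prod.map d c ≫ prod.map g f := by
    simp only [swap a b, swap c d, swap f g, Category.assoc, Iso.hom_inv_id_assoc,
      reassoc_of% w]
  exact ⟨w', ⟨Cofork.isColimitOfIsos _ hc _ (prod.braiding _ _) (prod.braiding _ _)
    (prod.braiding _ _) (braid_natural a b).symm (braid_natural c d).symm (swap f g).symm⟩⟩

end IsCoeq

theorem stmt3 {C : Type*} [Category C] [HasBinaryProducts C] [HasInitial C] :
    PropertyP C ↔
      ∀ {T X Y : C} (u v : T ⟶ X) (q : X ⟶ Y), IsCoeq u v q → ∀ Z : C,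
        IsCoeq (prod.map u (initial.to Z)) (prod.map v (initial.to Z))
          (prod.map q (𝟙 Z)) := by
  refine ⟨fun hP T X Y u v q hq Z => hP u v _ _ q (𝟙 Z) hq (.id_self _), ?_⟩
  intro H T₁ T₂ X X' Y Y' u v u' v' q₁ q₂ h₁ h₂
  have hprod : prod.map q₁ q₂ = prod.map q₁ (𝟙 Y) ≫ prod.map (𝟙 X') q₂ := by simp
  rw [hprod]
  refine (H u v q₁ h₁ Y).comp (H u' v' q₂ h₂ X').prod_map_swap
    (prod.map (𝟙 T₁) (initial.to T₂)) (by simp) (by simp)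
    (prod.map (initial.to T₁) (𝟙 T₂)) (by simp) (by simp) ?_
  rw [← hprod, prod.map_map, prod.map_map, h₁.1, h₂.1]
end

section
/- Let C be a finitely complete pointed category with coequalizers in which regular epimorphisms are stable under binary products. If C is unital, then C satisfies property (P): the product of any two coequalizer diagrams is a coequalizer diagram. -/
open CategoryTheory Limits

/-- A regular epimorphism: a coequalizer of some parallel pair. -/
def IsRegEpi {C : Type*} [Category C] {X Q : C} (q : X ⟶ Q) : Prop :=
  ∃ (T : C) (a b : T ⟶ X), IsCoeq a b q

/-- A generalized element `m : S ⟶ X` belongs to the (sub)object `r : R ⟶ X` if it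
factors through `r`. -/
def Factors {C : Type*} [Category C] {R X S : C} (r : R ⟶ X) (m : S ⟶ X) : Prop :=
  ∃ h : S ⟶ R, h ≫ r = m

/-- A pointed category is unital if for any binary relation `r : R ↪ A ⨯ B` and
generalized elements `a`, `b`, `(a,0) ∈ R` and `(0,b) ∈ R` imply `(a,b) ∈ R`. -/
def Unital (C : Type*) [Category C] [HasZeroMorphisms C] [HasBinaryProducts C] : Prop :=
  ∀ {R A B : C} (r : R ⟶ A ⨯ B), Mono r → ∀ {S : C} (a : S ⟶ A) (b : S ⟶ B),
    Factors r (prod.lift a 0) → Factors r (prod.lift 0 b) → Factors r (prod.lift a b)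

/-!
By the stability hypothesis `q₁ × q₂` is a regular epimorphism, hence the coequalizer of its
kernel pair; so it suffices that every `w` coequalizing `(u × u', v × v')` also coequalizes that
kernel pair. The kernel pair of `q₁ × q₂` factors through the product of the kernel pairs
`K₁ × K₂` of `q₁` and `q₂`, and there the two composites with `w` agree on `K₁ × 0` and on
`0 × K₂` (because `w ∘ (1, 0)` factors through `q₁` and `w ∘ (0, 1)` through `q₂`). In a unital
category the two injections into a product are jointly epimorphic, so the composites agree.
-/

section Coequalizers

variable {C : Type*} [Category C]

lemma IsCoeq.of_coequalizes {T T' X Q : C} {u v : T ⟶ X} {u' v' : T' ⟶ X} {q : X ⟶ Q}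
    (hq : IsCoeq u v q) (hq' : u' ≫ q = v' ≫ q)
    (hw : ∀ {Z : C} (w : X ⟶ Z), u' ≫ w = v' ≫ w → u ≫ w = v ≫ w) :
    IsCoeq u' v' q := by
  obtain ⟨_, ⟨hc⟩⟩ := hq
  refine ⟨hq', ⟨Cofork.IsColimit.mk _
    (fun s => Cofork.IsColimit.desc hc s.π (hw s.π s.condition))
    (fun s => Cofork.IsColimit.π_desc' hc _ _) (fun s m hm => ?_)⟩⟩
  apply Cofork.IsColimit.hom_ext hc
  rw [Cofork.IsColimit.π_desc']
  exact hm

variable [HasPullbacks C]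

lemma IsCoeq.pullback_fst_comp_eq_snd_comp {T X Q Z : C} {u v : T ⟶ X} {q : X ⟶ Q}
    (hq : IsCoeq u v q) {w : X ⟶ Z} (hw : u ≫ w = v ≫ w) :
    pullback.fst q q ≫ w = pullback.snd q q ≫ w := by
  obtain ⟨_, ⟨hc⟩⟩ := hq
  rw [← Cofork.IsColimit.π_desc' hc w hw, Cofork.π_ofπ, pullback.condition_assoc]

lemma IsCoeq.kernelPair {T X Q : C} {u v : T ⟶ X} {q : X ⟶ Q} (hq : IsCoeq u v q) :
    IsCoeq (pullback.fst q q) (pullback.snd q q) q :=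
  hq.of_coequalizes pullback.condition fun w hw => by
    simpa only [pullback.lift_fst_assoc, pullback.lift_snd_assoc] using
      pullback.lift u v hq.1 ≫= hw

variable [HasBinaryProducts C]

lemma exists_comp_prodMap_pullback {X X' Y Y' Z Z' : C} (f : X ⟶ Z) (f' : X' ⟶ Z)
    (g : Y ⟶ Z') (g' : Y' ⟶ Z') :
    ∃ φ : pullback (prod.map f g) (prod.map f' g') ⟶ pullback f f' ⨯ pullback g g',
      φ ≫ prod.map (pullback.fst f f') (pullback.fst g g') = pullback.fst _ _ ∧
      φ ≫ prod.map (pullback.snd f f') (pullback.snd g g') = pullback.snd _ _ := by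
  have hX : (pullback.fst (prod.map f g) (prod.map f' g') ≫ prod.fst) ≫ f =
      (pullback.snd (prod.map f g) (prod.map f' g') ≫ prod.fst) ≫ f' := by
    simpa using pullback.condition (f := prod.map f g) (g := prod.map f' g') =≫ prod.fst
  have hY : (pullback.fst (prod.map f g) (prod.map f' g') ≫ prod.snd) ≫ g =
      (pullback.snd (prod.map f g) (prod.map f' g') ≫ prod.snd) ≫ g' := by
    simpa using pullback.condition (f := prod.map f g) (g := prod.map f' g') =≫ prod.snd
  refine ⟨prod.lift (pullback.lift _ _ hX) (pullback.lift _ _ hY), ?_, ?_⟩ <;>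
    ext <;> simp only [prod.lift_map, prod.lift_fst, prod.lift_snd, pullback.lift_fst,
      pullback.lift_snd]

end Coequalizers

section Unital

variable {C : Type*} [Category C] [HasZeroMorphisms C] [HasBinaryProducts C]

lemma Unital.prod_hom_ext [HasEqualizers C] (hU : Unital C) {A B Z : C} {f g : A ⨯ B ⟶ Z}
    (h₁ : prod.lift (𝟙 A) 0 ≫ f = prod.lift (𝟙 A) 0 ≫ g)
    (h₂ : prod.lift 0 (𝟙 B) ≫ f = prod.lift 0 (𝟙 B) ≫ g) : f = g := by
  have hfst : prod.lift prod.fst (0 : A ⨯ B ⟶ B) = prod.fst ≫ prod.lift (𝟙 A) 0 := by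
    ext <;> simp
  have hsnd : prod.lift (0 : A ⨯ B ⟶ A) prod.snd = prod.snd ≫ prod.lift 0 (𝟙 B) := by
    ext <;> simp
  obtain ⟨e, he⟩ := hU (equalizer.ι f g) inferInstance prod.fst prod.snd
    ⟨equalizer.lift _ (by rw [hfst, Category.assoc, Category.assoc, h₁]), equalizer.lift_ι _ _⟩
    ⟨equalizer.lift _ (by rw [hsnd, Category.assoc, Category.assoc, h₂]), equalizer.lift_ι _ _⟩
  rw [prod.lift_fst_snd] at he
  rw [← Category.id_comp f, ← Category.id_comp g, ← he, Category.assoc, Category.assoc,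
    equalizer.condition]

lemma Unital.prodMap_fst_comp_eq_prodMap_snd_comp [HasPullbacks C] [HasEqualizers C]
    (hU : Unital C) {T₁ T₂ X X' Y Y' Z : C} {u v : T₁ ⟶ X} {u' v' : T₂ ⟶ Y}
    {q₁ : X ⟶ X'} {q₂ : Y ⟶ Y'}
    (h₁ : IsCoeq u v q₁) (h₂ : IsCoeq u' v' q₂) {w : X ⨯ Y ⟶ Z}
    (hw : prod.map u u' ≫ w = prod.map v v' ≫ w) :
    prod.map (pullback.fst q₁ q₁) (pullback.fst q₂ q₂) ≫ w =
      prod.map (pullback.snd q₁ q₁) (pullback.snd q₂ q₂) ≫ w := by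
  have hw₁ : u ≫ prod.lift (𝟙 X) 0 ≫ w = v ≫ prod.lift (𝟙 X) 0 ≫ w := by
    simpa [prod.comp_lift_assoc] using prod.lift (𝟙 T₁) (0 : T₁ ⟶ T₂) ≫= hw
  have hw₂ : u' ≫ prod.lift 0 (𝟙 Y) ≫ w = v' ≫ prod.lift 0 (𝟙 Y) ≫ w := by
    simpa [prod.comp_lift_assoc] using prod.lift (0 : T₂ ⟶ T₁) (𝟙 T₂) ≫= hw
  apply hU.prod_hom_ext
  · simpa [prod.comp_lift_assoc] using h₁.pullback_fst_comp_eq_snd_comp hw₁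
  · simpa [prod.comp_lift_assoc] using h₂.pullback_fst_comp_eq_snd_comp hw₂

end Unital

theorem stmt5_general {C : Type*} [Category C] [HasFiniteLimits C] [HasZeroMorphisms C]
    (hstab : ∀ {X X' Y Y' : C} (f : X ⟶ X') (g : Y ⟶ Y'),
      IsRegEpi f → IsRegEpi g → IsRegEpi (prod.map f g))
    (hU : Unital C) : PropertyP C := by
  intro T₁ T₂ X X' Y Y' u v u' v' q₁ q₂ h₁ h₂
  obtain ⟨_, _, _, hQ⟩ := hstab q₁ q₂ ⟨_, _, _, h₁⟩ ⟨_, _, _, h₂⟩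
  refine (IsCoeq.kernelPair hQ).of_coequalizes (by simp [h₁.1, h₂.1]) fun w hw => ?_
  obtain ⟨φ, hφ₁, hφ₂⟩ := exists_comp_prodMap_pullback q₁ q₁ q₂ q₂
  rw [← hφ₁, ← hφ₂, Category.assoc, Category.assoc,
    hU.prodMap_fst_comp_eq_prodMap_snd_comp h₁ h₂ hw]

theorem stmt5 {C : Type*} [Category C] [HasFiniteLimits C] [HasCoequalizers C]
    [HasZeroObject C] [HasZeroMorphisms C]
    (hstab : ∀ {X X' Y Y' : C} (f : X ⟶ X') (g : Y ⟶ Y'),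
      IsRegEpi f → IsRegEpi g → IsRegEpi (prod.map f g))
    (hU : Unital C) : PropertyP C :=
  stmt5_general hstab hU
end

section
/- Let C be a finitely complete pointed category with coequalizers in which regular epimorphisms are stable under binary products. If C is a majority category, then C satisfies property (P). -/
/-! If `t` coequalizes `u ⨯ u'` and `v ⨯ v'`, it suffices to show that `t` identifies any two
generalized elements identified by `q₁ ⨯ q₂`; since the product of the regular epimorphisms
`q₁, q₂` is a coequalizer of some pair, `q₁ ⨯ q₂` is then the coequalizer of `u ⨯ u'` and
`v ⨯ v'`. Changing one coordinate at a time, we must show `t(a, ψ) = t(b, ψ)` when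
`a q₁ = b q₁`. At `ψ = 0` this holds because `t ⟨𝟙, 0⟩` is coequalized by `u, v`, hence factors
through `q₁`; the majority property, applied to the relation `t(x₁, y₁) = t(x₂, y₂)`,
transports it from `0` to an arbitrary `ψ`. -/

open CategoryTheory Limits

/-- A finitely complete category is a majority category if for every ternary relation
`r : R ↪ X ⨯ Y ⨯ Z` and generalized elements, `(x,y,z') ∈ R`, `(x,y',z) ∈ R` and
`(x',y,z) ∈ R` imply `(x,y,z) ∈ R`. -/
def Majority (C : Type*) [Category C] [HasBinaryProducts C] : Prop :=
  ∀ {R X Y Z : C} (r : R ⟶ X ⨯ Y ⨯ Z), Mono r →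
    ∀ {S : C} (x x' : S ⟶ X) (y y' : S ⟶ Y) (z z' : S ⟶ Z),
      Factors r (prod.lift x (prod.lift y z')) →
      Factors r (prod.lift x (prod.lift y' z)) →
      Factors r (prod.lift x' (prod.lift y z)) →
      Factors r (prod.lift x (prod.lift y z))

section

variable {C : Type*} [Category C]

namespace IsCoeq

variable {T X Q W S : C} {u v : T ⟶ X} {q : X ⟶ Q}

theorem comp_eq_comp (hq : IsCoeq u v q) {f : X ⟶ W} (hf : u ≫ f = v ≫ f) {a b : S ⟶ X}
    (hab : a ≫ q = b ≫ q) : a ≫ f = b ≫ f := by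
  obtain ⟨hc, ⟨hcol⟩⟩ := hq
  rw [← Cofork.IsColimit.π_desc' hcol f hf, Cofork.π_ofπ, reassoc_of% hab]

theorem of_isCoeq {T' : C} {a b : T' ⟶ X} (hq : IsCoeq a b q) (huv : u ≫ q = v ≫ q)
    (hab : ∀ {W : C} (t : X ⟶ W), u ≫ t = v ≫ t → a ≫ t = b ≫ t) : IsCoeq u v q := by
  obtain ⟨hc, ⟨hcol⟩⟩ := hq
  refine ⟨huv, ⟨Cofork.IsColimit.mk' _ fun s => ?_⟩⟩
  refine ⟨hcol.desc (Cofork.ofπ s.π (hab s.π s.condition)), Cofork.IsColimit.π_desc hcol,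
    fun hm => ?_⟩
  exact Cofork.IsColimit.hom_ext hcol (hm.trans (Cofork.IsColimit.π_desc' hcol s.π _).symm)

end IsCoeq

theorem factors_equalizer_ι_iff [HasEqualizers C] {X W S : C} (f g : X ⟶ W) (m : S ⟶ X) :
    Factors (equalizer.ι f g) m ↔ m ≫ f = m ≫ g := by
  refine ⟨fun ⟨h, hh⟩ => ?_, fun hm => ⟨equalizer.lift m hm, equalizer.lift_ι m hm⟩⟩
  rw [← hh, Category.assoc, Category.assoc, equalizer.condition]

section Majority

variable [HasBinaryProducts C] [HasEqualizers C]

/-- The majority property applied to the relation `t(x₁, y₁) = t(x₂, y₂)` on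
`X ⨯ X ⨯ (Y ⨯ Y)`, at `(a, b, (y₀, y₀))`, `(a, a, (ψ, ψ))` and `(b, b, (ψ, ψ))`. -/
theorem Majority.lift_comp_eq_of_lift_comp_eq (hM : Majority C) {X Y W S : C}
    (t : X ⨯ Y ⟶ W) {a b : S ⟶ X} {y₀ : S ⟶ Y} (h : prod.lift a y₀ ≫ t = prod.lift b y₀ ≫ t)
    (ψ : S ⟶ Y) : prod.lift a ψ ≫ t = prod.lift b ψ ≫ t := by
  let f : X ⨯ X ⨯ (Y ⨯ Y) ⟶ W := prod.lift prod.fst (prod.snd ≫ prod.snd ≫ prod.fst) ≫ t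
  let g : X ⨯ X ⨯ (Y ⨯ Y) ⟶ W :=
    prod.lift (prod.snd ≫ prod.fst) (prod.snd ≫ prod.snd ≫ prod.snd) ≫ t
  have mem : ∀ (x₁ x₂ : S ⟶ X) (y₁ y₂ : S ⟶ Y),
      Factors (equalizer.ι f g) (prod.lift x₁ (prod.lift x₂ (prod.lift y₁ y₂))) ↔
        prod.lift x₁ y₁ ≫ t = prod.lift x₂ y₂ ≫ t := by
    intro x₁ x₂ y₁ y₂
    simp only [factors_equalizer_ι_iff, f, g, ← Category.assoc, prod.comp_lift, prod.lift_fst,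
      prod.lift_snd]
  exact (mem a b ψ ψ).1 <| hM (equalizer.ι f g) inferInstance a b b a
    (prod.lift ψ ψ) (prod.lift y₀ y₀) ((mem a b y₀ y₀).2 h) ((mem a a ψ ψ).2 rfl)
    ((mem b b ψ ψ).2 rfl)

end Majority

section Pointed

variable [HasBinaryProducts C] [HasZeroMorphisms C]

theorem lift_zero_comp_eq_of_isCoeq {T₁ T₂ X Y X' W S : C} {u v : T₁ ⟶ X} {u' v' : T₂ ⟶ Y}
    {q₁ : X ⟶ X'} (hq : IsCoeq u v q₁) {t : X ⨯ Y ⟶ W}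
    (ht : prod.map u u' ≫ t = prod.map v v' ≫ t) {a b : S ⟶ X} (hab : a ≫ q₁ = b ≫ q₁) :
    prod.lift a 0 ≫ t = prod.lift b 0 ≫ t := by
  -- `u ≫ ⟨𝟙, 0⟩ = ⟨𝟙, 0⟩ ≫ (u ⨯ u')`, and likewise for `v`.
  have hj : u ≫ prod.lift (𝟙 X) 0 ≫ t = v ≫ prod.lift (𝟙 X) 0 ≫ t := by
    simp only [← Category.assoc, prod.comp_lift, Category.comp_id, comp_zero]
    simpa using prod.lift (𝟙 T₁) (0 : T₁ ⟶ T₂) ≫= ht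
  simpa only [← Category.assoc, prod.comp_lift, Category.comp_id, comp_zero] using
    hq.comp_eq_comp hj hab

variable [HasEqualizers C] {T₁ T₂ X Y X' Y' W S : C} {u v : T₁ ⟶ X} {u' v' : T₂ ⟶ Y}
  {t : X ⨯ Y ⟶ W}

theorem lift_comp_eq_of_isCoeq_left (hM : Majority C) {q₁ : X ⟶ X'} (hq : IsCoeq u v q₁)
    (ht : prod.map u u' ≫ t = prod.map v v' ≫ t) {a b : S ⟶ X} (hab : a ≫ q₁ = b ≫ q₁)
    (ψ : S ⟶ Y) : prod.lift a ψ ≫ t = prod.lift b ψ ≫ t :=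
  hM.lift_comp_eq_of_lift_comp_eq t (lift_zero_comp_eq_of_isCoeq hq ht hab) ψ

theorem lift_comp_eq_of_isCoeq_right (hM : Majority C) {q₂ : Y ⟶ Y'} (hq : IsCoeq u' v' q₂)
    (ht : prod.map u u' ≫ t = prod.map v v' ≫ t) {a b : S ⟶ Y} (hab : a ≫ q₂ = b ≫ q₂)
    (ψ : S ⟶ X) : prod.lift ψ a ≫ t = prod.lift ψ b ≫ t := by
  have ht' : prod.map u' u ≫ (prod.braiding Y X).hom ≫ t =
      prod.map v' v ≫ (prod.braiding Y X).hom ≫ t := by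
    simpa only [braid_natural_assoc] using (prod.braiding T₂ T₁).hom ≫= ht
  simpa only [prod.braiding_hom, ← Category.assoc, prod.comp_lift, prod.lift_fst,
    prod.lift_snd] using lift_comp_eq_of_isCoeq_left hM hq ht' hab ψ

theorem comp_eq_comp_of_comp_prodMap_eq (hM : Majority C) {q₁ : X ⟶ X'} {q₂ : Y ⟶ Y'}
    (hq₁ : IsCoeq u v q₁) (hq₂ : IsCoeq u' v' q₂) (ht : prod.map u u' ≫ t = prod.map v v' ≫ t) {a b : S ⟶ X ⨯ Y}
    (hab : a ≫ prod.map q₁ q₂ = b ≫ prod.map q₁ q₂) : a ≫ t = b ≫ t := by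
  have h₁ : (a ≫ prod.fst) ≫ q₁ = (b ≫ prod.fst) ≫ q₁ := by simpa using hab =≫ prod.fst
  have h₂ : (a ≫ prod.snd) ≫ q₂ = (b ≫ prod.snd) ≫ q₂ := by simpa using hab =≫ prod.snd
  calc a ≫ t = prod.lift (a ≫ prod.fst) (a ≫ prod.snd) ≫ t := by
        rw [← prod.comp_lift, prod.lift_fst_snd, Category.comp_id]
    _ = prod.lift (b ≫ prod.fst) (a ≫ prod.snd) ≫ t :=
      lift_comp_eq_of_isCoeq_left hM hq₁ ht h₁ _
    _ = prod.lift (b ≫ prod.fst) (b ≫ prod.snd) ≫ t :=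
      lift_comp_eq_of_isCoeq_right hM hq₂ ht h₂ _
    _ = b ≫ t := by rw [← prod.comp_lift, prod.lift_fst_snd, Category.comp_id]

end Pointed

end

theorem stmt6_general {C : Type*} [Category C] [HasFiniteLimits C]
    [HasZeroMorphisms C]
    (hstab : ∀ {X X' Y Y' : C} (f : X ⟶ X') (g : Y ⟶ Y'),
      IsRegEpi f → IsRegEpi g → IsRegEpi (prod.map f g))
    (hM : Majority C) : PropertyP C := by
  intro T₁ T₂ X X' Y Y' u v u' v' q₁ q₂ hq₁ hq₂
  obtain ⟨T, a, b, hq⟩ := hstab q₁ q₂ ⟨T₁, u, v, hq₁⟩ ⟨T₂, u', v', hq₂⟩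
  refine hq.of_isCoeq ?_ fun t ht => comp_eq_comp_of_comp_prodMap_eq hM hq₁ hq₂ ht hq.1
  rw [prod.map_map, prod.map_map, hq₁.1, hq₂.1]

theorem stmt6 {C : Type*} [Category C] [HasFiniteLimits C] [HasCoequalizers C]
    [HasZeroObject C] [HasZeroMorphisms C]
    (hstab : ∀ {X X' Y Y' : C} (f : X ⟶ X') (g : Y ⟶ Y'),
      IsRegEpi f → IsRegEpi g → IsRegEpi (prod.map f g))
    (hM : Majority C) : PropertyP C :=
  stmt6_general hstab hM
end

section
/- Let C be a finitely complete pointed category with coequalizers in which regular epimorphisms are stable under binary products. If C is a Gumm category (satisfies the categorical shifting lemma), then C satisfies property (P). -/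
open CategoryTheory Limits

/-- The relation on generalized elements determined by a relation `r : R ⟶ X ⨯ X`. -/
def ERel {C : Type*} [Category C] [HasBinaryProducts C] {R X S : C}
    (r : R ⟶ X ⨯ X) (a b : S ⟶ X) : Prop :=
  Factors r (prod.lift a b)

/-- `r : R ⟶ X ⨯ X` is an (internal) equivalence relation: a monomorphism whose
induced relation on generalized elements is reflexive, symmetric and transitive. -/
def IsEquivRel {C : Type*} [Category C] [HasBinaryProducts C] {R X : C}
    (r : R ⟶ X ⨯ X) : Prop :=
  Mono r ∧ (∀ {S : C} (a : S ⟶ X), ERel r a a) ∧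
    (∀ {S : C} (a b : S ⟶ X), ERel r a b → ERel r b a) ∧
    (∀ {S : C} (a b c : S ⟶ X), ERel r a b → ERel r b c → ERel r a c)

/-- A Gumm category: the shifting lemma holds for internal equivalence relations. -/
def Gumm (C : Type*) [Category C] [HasBinaryProducts C] : Prop :=
  ∀ {X R' S' T' : C} (R : R' ⟶ X ⨯ X) (S : S' ⟶ X ⨯ X) (T : T' ⟶ X ⨯ X),
    IsEquivRel R → IsEquivRel S → IsEquivRel T →
    (∀ {U : C} (a b : U ⟶ X), ERel R a b → ERel S a b → ERel T a b) →
    ∀ {U : C} (x y z w : U ⟶ X),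
      ERel R x y → ERel R w z → ERel S y z → ERel S x w → ERel T y z → ERel T x w

/-!
Since `q₁ × q₂` is a regular epimorphism, it is the coequalizer of its kernel pair, so it suffices
to show that every `f` coequalizing `u × u'` and `v × v'` identifies `(x, y)` with `(x', y')`
whenever `x q₁ = x' q₁` and `y q₂ = y' q₂`. Restricted to `0 × Y`, `f` factors through `q₂`, so
`f (0, y) = f (0, y')`. The shifting lemma, applied to the kernel pairs of the two projections
(whose intersection is the diagonal) and of `f`, moves this equality from the first coordinate `0`
to `x`: `f (x, y) = f (x, y')`. Symmetrically `f (x, y') = f (x', y')`.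
-/

section

variable {C : Type*} [Category C]

lemma IsCoeq.comp_eq_comp_s7 {T X Q Z U : C} {u v : T ⟶ X} {q : X ⟶ Q} (hq : IsCoeq u v q)
    {g : X ⟶ Z} (hg : u ≫ g = v ≫ g) {x x' : U ⟶ X} (hx : x ≫ q = x' ≫ q) :
    x ≫ g = x' ≫ g := by
  obtain ⟨_, ⟨hc⟩⟩ := hq
  have hd : q ≫ Cofork.IsColimit.desc hc g hg = g := Cofork.IsColimit.π_desc' hc g hg
  rw [← hd, reassoc_of% hx]

lemma IsCoeq.of_comp_eq_imp {T T' X Q : C} {a b : T ⟶ X} {u v : T' ⟶ X} {q : X ⟶ Q}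
    (hq : IsCoeq a b q) (huv : u ≫ q = v ≫ q)
    (H : ∀ {Z : C} (f : X ⟶ Z), u ≫ f = v ≫ f → a ≫ f = b ≫ f) : IsCoeq u v q := by
  obtain ⟨hab, ⟨hc⟩⟩ := hq
  refine ⟨huv, ⟨Cofork.IsColimit.mk' _ fun s =>
    ⟨Cofork.IsColimit.desc hc s.π (H s.π s.condition), ?_, fun hm => ?_⟩⟩⟩
  · exact Cofork.IsColimit.π_desc' hc _ _
  · exact Cofork.IsColimit.hom_ext hc (hm.trans (Cofork.IsColimit.π_desc' hc _ _).symm)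

lemma IsRegEpi.isCoeq_pullback [HasPullbacks C] {X Q : C} {q : X ⟶ Q} (hq : IsRegEpi q) :
    IsCoeq (pullback.fst q q) (pullback.snd q q) q := by
  obtain ⟨T, a, b, hab⟩ := hq
  refine hab.of_comp_eq_imp pullback.condition fun f hf => ?_
  simpa [pullback.lift_fst_assoc, pullback.lift_snd_assoc] using pullback.lift a b hab.1 ≫= hf

section KernelPair

variable [HasBinaryProducts C] [HasPullbacks C]

noncomputable def kernelPairRel {X Z : C} (f : X ⟶ Z) : pullback f f ⟶ X ⨯ X :=
  prod.lift (pullback.fst f f) (pullback.snd f f)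

lemma eRel_kernelPairRel_iff {X Z S : C} (f : X ⟶ Z) (a b : S ⟶ X) :
    ERel (kernelPairRel f) a b ↔ a ≫ f = b ≫ f := by
  constructor
  · rintro ⟨h, hh⟩
    have h₁ : h ≫ pullback.fst f f = a := by
      simpa [kernelPairRel, prod.lift_fst] using hh =≫ prod.fst
    have h₂ : h ≫ pullback.snd f f = b := by
      simpa [kernelPairRel, prod.lift_snd] using hh =≫ prod.snd
    rw [← h₁, ← h₂, Category.assoc, Category.assoc, pullback.condition]
  · refine fun h => ⟨pullback.lift a b h, ?_⟩
    ext <;> simp [kernelPairRel, prod.lift_fst, prod.lift_snd, pullback.lift_fst, pullback.lift_snd]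

lemma isEquivRel_kernelPairRel {X Z : C} (f : X ⟶ Z) : IsEquivRel (kernelPairRel f) := by
  refine ⟨⟨fun g h hgh => ?_⟩, fun a => ?_, fun a b hab => ?_, fun a b c hab hbc => ?_⟩
  · ext
    · simpa [kernelPairRel, prod.lift_fst] using hgh =≫ prod.fst
    · simpa [kernelPairRel, prod.lift_snd] using hgh =≫ prod.snd
  · exact (eRel_kernelPairRel_iff f a a).2 rfl
  · rw [eRel_kernelPairRel_iff] at hab ⊢; exact hab.symm
  · rw [eRel_kernelPairRel_iff] at hab hbc ⊢; exact hab.trans hbc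

lemma Gumm.shift_kernelPair (hG : Gumm C) {P A B Z U : C} (g₁ : P ⟶ A) (g₂ : P ⟶ B)
    (f : P ⟶ Z) (hg : ∀ {V : C} (a b : V ⟶ P), a ≫ g₁ = b ≫ g₁ → a ≫ g₂ = b ≫ g₂ → a = b)
    {x y z w : U ⟶ P} (hxy : x ≫ g₁ = y ≫ g₁) (hwz : w ≫ g₁ = z ≫ g₁)
    (hyz : y ≫ g₂ = z ≫ g₂) (hxw : x ≫ g₂ = w ≫ g₂) (hf : y ≫ f = z ≫ f) :
    x ≫ f = w ≫ f := by
  rw [← eRel_kernelPairRel_iff] at hxy hwz hyz hxw hf ⊢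
  refine hG _ _ _ (isEquivRel_kernelPairRel g₁) (isEquivRel_kernelPairRel g₂)
    (isEquivRel_kernelPairRel f) (fun a b h₁ h₂ => ?_) x y z w hxy hwz hyz hxw hf
  rw [eRel_kernelPairRel_iff] at h₁ h₂ ⊢
  rw [hg a b h₁ h₂]

lemma Gumm.prod_lift_comp_eq_right (hG : Gumm C) {X Y Z U : C} (f : X ⨯ Y ⟶ Z)
    {x₀ x : U ⟶ X} {y y' : U ⟶ Y} (h : prod.lift x₀ y ≫ f = prod.lift x₀ y' ≫ f) :
    prod.lift x y ≫ f = prod.lift x y' ≫ f :=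
  hG.shift_kernelPair prod.snd prod.fst f (fun _ _ h₂ h₁ => prod.hom_ext h₁ h₂)
    (by simp only [prod.lift_snd]) (by simp only [prod.lift_snd])
    (by simp only [prod.lift_fst]) (by simp only [prod.lift_fst]) h

lemma Gumm.prod_lift_comp_eq_left (hG : Gumm C) {X Y Z U : C} (f : X ⨯ Y ⟶ Z)
    {x x' : U ⟶ X} {y₀ y : U ⟶ Y} (h : prod.lift x y₀ ≫ f = prod.lift x' y₀ ≫ f) :
    prod.lift x y ≫ f = prod.lift x' y ≫ f :=
  hG.shift_kernelPair prod.fst prod.snd f (fun _ _ h₁ h₂ => prod.hom_ext h₁ h₂)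
    (by simp only [prod.lift_fst]) (by simp only [prod.lift_fst])
    (by simp only [prod.lift_snd]) (by simp only [prod.lift_snd]) h

end KernelPair

section Pointed

variable [HasBinaryProducts C] [HasZeroMorphisms C]
variable {T₁ T₂ X X' Y Y' Z U : C} {u v : T₁ ⟶ X} {u' v' : T₂ ⟶ Y} {f : X ⨯ Y ⟶ Z}

lemma IsCoeq.prod_lift_zero_left_comp_eq {q₂ : Y ⟶ Y'} (hq₂ : IsCoeq u' v' q₂)
    (hf : prod.map u u' ≫ f = prod.map v v' ≫ f) {y y' : U ⟶ Y} (hy : y ≫ q₂ = y' ≫ q₂) :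
    prod.lift 0 y ≫ f = prod.lift 0 y' ≫ f := by
  have hu' : u' ≫ prod.lift 0 (𝟙 Y) ≫ f = v' ≫ prod.lift 0 (𝟙 Y) ≫ f := by
    simpa [prod.comp_lift_assoc] using prod.lift (0 : T₂ ⟶ T₁) (𝟙 T₂) ≫= hf
  simpa [prod.comp_lift_assoc] using hq₂.comp_eq_comp_s7 hu' hy

lemma IsCoeq.prod_lift_zero_right_comp_eq {q₁ : X ⟶ X'} (hq₁ : IsCoeq u v q₁)
    (hf : prod.map u u' ≫ f = prod.map v v' ≫ f) {x x' : U ⟶ X} (hx : x ≫ q₁ = x' ≫ q₁) :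
    prod.lift x 0 ≫ f = prod.lift x' 0 ≫ f := by
  have hu : u ≫ prod.lift (𝟙 X) 0 ≫ f = v ≫ prod.lift (𝟙 X) 0 ≫ f := by
    simpa [prod.comp_lift_assoc] using prod.lift (𝟙 T₁) (0 : T₁ ⟶ T₂) ≫= hf
  simpa [prod.comp_lift_assoc] using hq₁.comp_eq_comp_s7 hu hx

lemma Gumm.comp_eq_of_prod_map_eq [HasPullbacks C] (hG : Gumm C) {q₁ : X ⟶ X'}
    {q₂ : Y ⟶ Y'} (hq₁ : IsCoeq u v q₁) (hq₂ : IsCoeq u' v' q₂)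
    (hf : prod.map u u' ≫ f = prod.map v v' ≫ f) {a b : U ⟶ X ⨯ Y}
    (hab : a ≫ prod.map q₁ q₂ = b ≫ prod.map q₁ q₂) : a ≫ f = b ≫ f := by
  have h₁ : (a ≫ prod.fst) ≫ q₁ = (b ≫ prod.fst) ≫ q₁ := by simpa using hab =≫ prod.fst
  have h₂ : (a ≫ prod.snd) ≫ q₂ = (b ≫ prod.snd) ≫ q₂ := by simpa using hab =≫ prod.snd
  calc a ≫ f = prod.lift (a ≫ prod.fst) (a ≫ prod.snd) ≫ f := by simp [← prod.comp_lift]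
    _ = prod.lift (a ≫ prod.fst) (b ≫ prod.snd) ≫ f :=
      hG.prod_lift_comp_eq_right f (hq₂.prod_lift_zero_left_comp_eq hf h₂)
    _ = prod.lift (b ≫ prod.fst) (b ≫ prod.snd) ≫ f :=
      hG.prod_lift_comp_eq_left f (hq₁.prod_lift_zero_right_comp_eq hf h₁)
    _ = b ≫ f := by simp [← prod.comp_lift]

end Pointed

end

theorem stmt7_general {C : Type*} [Category C] [HasFiniteLimits C]
    [HasZeroMorphisms C]
    (hstab : ∀ {X X' Y Y' : C} (f : X ⟶ X') (g : Y ⟶ Y'),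
      IsRegEpi f → IsRegEpi g → IsRegEpi (prod.map f g))
    (hG : Gumm C) : PropertyP C := by
  intro T₁ T₂ X X' Y Y' u v u' v' q₁ q₂ hq₁ hq₂
  have hq := (hstab q₁ q₂ ⟨_, _, _, hq₁⟩ ⟨_, _, _, hq₂⟩).isCoeq_pullback
  refine hq.of_comp_eq_imp ?_ fun _ hf =>
    hG.comp_eq_of_prod_map_eq hq₁ hq₂ hf pullback.condition
  rw [prod.map_map, prod.map_map, hq₁.1, hq₂.1]

theorem stmt7 {C : Type*} [Category C] [HasFiniteLimits C] [HasCoequalizers C]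
    [HasZeroObject C] [HasZeroMorphisms C]
    (hstab : ∀ {X X' Y Y' : C} (f : X ⟶ X') (g : Y ⟶ Y'),
      IsRegEpi f → IsRegEpi g → IsRegEpi (prod.map f g))
    (hG : Gumm C) : PropertyP C :=
  stmt7_general hstab hG
end

section
/- Let V be a pointed variety of universal algebras (single constant 0) admitting binary terms b₁,…,b_m, unary terms c₁,…,c_m, and (m+2)-ary terms p₁,…,p_n satisfying: p₁(x,y,b₁(x,y),…,b_m(x,y)) = x; p_i(y,x,b₁(x,y),…,b_m(x,y)) = p_{i+1}(x,y,b₁(x,y),…,b_m(x,y)) for 1 ≤ i < n; p_n(y,x,b₁(x,y),…,b_m(x,y)) = y; and p_i(0,0,c₁(z),…,c_m(z)) = z for all i. Then for any algebras A, B in V, any congruence C on A × B, and elements x, y ∈ A, z ∈ B: if (x,0) C (y,0), then (x,z) C (y,z). -/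
/-- a pointed variety admitting the given Mal'tsev terms satisfies the
egg-box condition for congruences on binary products.  The variety is represented by
two of its algebras `A`, `B`: the constant `0` is interpreted as `zA : A`, `zB : B`,
the terms `bᵢ, cᵢ, pᵢ` are interpreted as operations on `A` and on `B` (and hence
componentwise on the product algebra `A × B`), the displayed identities hold in `A`
and in `B`, and a congruence on `A × B` is an equivalence relation compatible with
all (term) operations. -/
theorem stmt9 {A B : Type*} {m n : ℕ} (hn : 0 < n)
    (zA : A) (bA : Fin m → A → A → A) (cA : Fin m → A → A)
    (pA : Fin n → A → A → (Fin m → A) → A)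
    (zB : B) (bB : Fin m → B → B → B) (cB : Fin m → B → B)
    (pB : Fin n → B → B → (Fin m → B) → B)
    -- the identities, in `A`:
    (hA1 : ∀ x y : A, pA ⟨0, hn⟩ x y (fun i => bA i x y) = x)
    (hAmid : ∀ (i : Fin n) (h : (i : ℕ) + 1 < n) (x y : A),
      pA i y x (fun j => bA j x y) = pA ⟨(i : ℕ) + 1, h⟩ x y (fun j => bA j x y))
    (hAn : ∀ x y : A, pA ⟨n - 1, Nat.sub_lt hn one_pos⟩ y x (fun j => bA j x y) = y)
    (hAz : ∀ (i : Fin n) (z : A), pA i zA zA (fun j => cA j z) = z)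
    -- the identities, in `B`:
    (hB1 : ∀ x y : B, pB ⟨0, hn⟩ x y (fun i => bB i x y) = x)
    (hBmid : ∀ (i : Fin n) (h : (i : ℕ) + 1 < n) (x y : B),
      pB i y x (fun j => bB j x y) = pB ⟨(i : ℕ) + 1, h⟩ x y (fun j => bB j x y))
    (hBn : ∀ x y : B, pB ⟨n - 1, Nat.sub_lt hn one_pos⟩ y x (fun j => bB j x y) = y)
    (hBz : ∀ (i : Fin n) (z : B), pB i zB zB (fun j => cB j z) = z)
    -- `C` is a congruence on the product algebra `A × B`:
    (C : A × B → A × B → Prop) (hC : Equivalence C)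
    (hCp : ∀ (i : Fin n) (x x' y y' : A × B) (w w' : Fin m → A × B),
      C x x' → C y y' → (∀ j, C (w j) (w' j)) →
      C (pA i x.1 y.1 (fun j => (w j).1), pB i x.2 y.2 (fun j => (w j).2))
        (pA i x'.1 y'.1 (fun j => (w' j).1), pB i x'.2 y'.2 (fun j => (w' j).2)))
    (hCb : ∀ (j : Fin m) (x x' y y' : A × B), C x x' → C y y' →
      C (bA j x.1 y.1, bB j x.2 y.2) (bA j x'.1 y'.1, bB j x'.2 y'.2))
    (hCc : ∀ (j : Fin m) (x x' : A × B), C x x' →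
      C (cA j x.1, cB j x.2) (cA j x'.1, cB j x'.2)) :
    ∀ (x y : A) (z : B), C (x, zB) (y, zB) → C (x, z) (y, z) := by
  intro x y z hxy
  set w : Fin m → A × B := fun j => (bA j x y, cB j z) with hwdef
  have hw : ∀ j, C (w j) (w j) := fun j => hC.refl _
  have key : ∀ k (h : k < n), C (x, z) (pA ⟨k, h⟩ y x (fun j => bA j x y), z) := by
    intro k
    induction k with
    | zero =>
      intro h
      have h1 := hCp ⟨0, h⟩ (x, zB) (y, zB) (y, zB) (x, zB) w w hxy (hC.symm hxy) hw
      simpa [hwdef, hA1, hBz] using h1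
    | succ k ih =>
      intro h
      have hk : k < n := Nat.lt_of_succ_lt h
      have prev := ih hk
      rw [hAmid ⟨k, hk⟩ h] at prev
      have h1 := hCp ⟨k + 1, h⟩ (x, zB) (y, zB) (y, zB) (x, zB) w w hxy (hC.symm hxy) hw
      exact hC.trans prev (by simpa [hwdef, hBz] using h1)
  have := key (n - 1) (Nat.sub_lt hn one_pos)
  rwa [hAn] at this
end

section
/- Let V be a pointed variety of universal algebras such that for every congruence C on any product A × B and all x, y ∈ A, z ∈ B, (x,0) C (y,0) implies (x,z) C (y,z). Then V admits, for some m and n, binary terms b₁,…,b_m, unary terms c₁,…,c_m, and (m+2)-ary terms p₁,…,p_n satisfying: p₁(x,y,b₁(x,y),…,b_m(x,y)) = x; p_i(y,x,b₁(x,y),…,b_m(x,y)) = p_{i+1}(x,y,b₁(x,y),…,b_m(x,y)); p_n(y,x,b₁(x,y),…,b_m(x,y)) = y; and p_i(0,0,c₁(z),…,c_m(z)) = z for all i. -/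
open FirstOrder Language

universe u v w

/-- The componentwise structure on a binary product of structures. -/
instance prodStructure {L : FirstOrder.Language.{u, v}} {M N : Type*} [L.Structure M]
    [L.Structure N] : L.Structure (M × N) where
  funMap f x := (Structure.funMap f (fun i => (x i).1),
    Structure.funMap f (fun i => (x i).2))
  RelMap r x := Structure.RelMap r (fun i => (x i).1) ∧
    Structure.RelMap r (fun i => (x i).2)

/-- `M` satisfies the set of equations `E` (so `M` lies in the variety axiomatized
by `E`). -/
def SatisfiesEqs (L : FirstOrder.Language.{u, v}) (E : Set (L.Term ℕ × L.Term ℕ))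
    (M : Type w) [L.Structure M] : Prop :=
  ∀ e ∈ E, ∀ val : ℕ → M, e.1.realize val = e.2.realize val

/-- A congruence on an algebra: an equivalence relation compatible with all
operations. -/
def IsCongruence (L : FirstOrder.Language.{u, v}) (M : Type w) [L.Structure M]
    (C : M → M → Prop) : Prop :=
  Equivalence C ∧ ∀ {k : ℕ} (f : L.Functions k) (x y : Fin k → M),
    (∀ i, C (x i) (y i)) → C (Structure.funMap f x) (Structure.funMap f y)

/-!
Take `A = F(x, y)` and `B = F(z)` free in the variety and let `Θ` be the principal congruence
on `A × B` generated by `((x, 0), (y, 0))`, so that `(x, z) Θ (y, z)` by hypothesis. By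
Mal'cev's description of `Θ` there are terms `pᵢ` and finitely many parameters
`(bⱼ(x, y), cⱼ(z)) ∈ A × B` with `(x, z) = p₁(u, v, ē)`, `pᵢ(v, u, ē) = pᵢ₊₁(u, v, ē)` and
`pₙ(v, u, ē) = (y, z)`, where `u = (x, 0)` and `v = (y, 0)`. The first coordinates are the
binary identities. Since `u` and `v` have the same second coordinate, the second coordinate is
constant along the chain, which gives `pᵢ(0, 0, c(z)) = z`. Identities holding at the
generators of a free algebra hold in the whole variety.
-/

namespace Relation

theorem transGen_apply_of_forall {α : Type*} {r : α → α → Prop} (hr : ∀ a, r a a) {k : ℕ}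
    (F : (Fin k → α) → α) (hF : ∀ x y, (∀ i, r (x i) (y i)) → r (F x) (F y))
    (x y : Fin k → α) (h : ∀ i, TransGen r (x i) (y i)) : TransGen r (F x) (F y) := by
  induction k with
  | zero => rw [Subsingleton.elim x y]; exact .single (hr _)
  | succ k ih =>
    have first : TransGen r (F x) (F (Fin.cons (y 0) (Fin.tail x))) := by
      conv_lhs => rw [← Fin.cons_self_tail x]
      refine TransGen.lift (fun c => F (Fin.cons c (Fin.tail x))) ?_ _ _ (h 0)
      exact fun a b hab => hF _ _ (Fin.forall_fin_succ.2 ⟨hab, fun _ => hr _⟩)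
    have rest : TransGen r (F (Fin.cons (y 0) (Fin.tail x))) (F y) := by
      conv_rhs => rw [← Fin.cons_self_tail y]
      refine ih (fun x' => F (Fin.cons (y 0) x')) ?_ _ _ fun i => h i.succ
      exact fun x' y' h' => hF _ _ (Fin.forall_fin_succ.2 ⟨hr _, h'⟩)
    exact first.trans rest

theorem TransGen.exists_chain {α : Type*} {r : α → α → Prop} {a b : α} (h : TransGen r a b) :
    ∃ n, 0 < n ∧ ∃ w : ℕ → α, w 0 = a ∧ w n = b ∧ ∀ i < n, r (w i) (w (i + 1)) := by
  induction h using TransGen.head_induction_on with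
  | @single a hab => exact ⟨1, one_pos, fun | 0 => a | _ => b, rfl, rfl, by simpa using hab⟩
  | @head a c hac _ ih =>
    obtain ⟨n, -, w, h0, hn, hw⟩ := ih
    refine ⟨n + 1, n.succ_pos, fun | 0 => a | i + 1 => w i, rfl, hn, ?_⟩
    rintro (_ | i) hi
    · simpa [h0] using hac
    · exact hw i (by omega)

end Relation

namespace UniversalAlgebra

variable {L : FirstOrder.Language.{u, v}}

section Equations

variable (E : Set (L.Term ℕ × L.Term ℕ))

inductive Derivable {α : Type*} : L.Term α → L.Term α → Prop
  | refl (t : L.Term α) : Derivable t t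
  | symm {s t : L.Term α} : Derivable s t → Derivable t s
  | trans {r s t : L.Term α} : Derivable r s → Derivable s t → Derivable r t
  | func {k : ℕ} (f : L.Functions k) {s t : Fin k → L.Term α} :
      (∀ i, Derivable (s i) (t i)) → Derivable (Term.func f s) (Term.func f t)
  | subst {e : L.Term ℕ × L.Term ℕ} (σ : ℕ → L.Term α) :
      e ∈ E → Derivable (e.1.subst σ) (e.2.subst σ)

variable {E}

theorem Derivable.realize_eq {α : Type*} {s t : L.Term α} (h : Derivable E s t) {M : Type*}
    [L.Structure M] (hM : SatisfiesEqs L E M) (val : α → M) :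
    s.realize val = t.realize val := by
  induction h with
  | refl => rfl
  | symm _ ih => exact ih.symm
  | trans _ _ ih₁ ih₂ => exact ih₁.trans ih₂
  | func f _ ih => exact congrArg (Structure.funMap f) (funext ih)
  | subst σ he => simpa only [Term.realize_subst] using hM _ he _

variable (E) in
def derivableSetoid (α : Type*) : Setoid (L.Term α) :=
  ⟨Derivable E, ⟨Derivable.refl, Derivable.symm, Derivable.trans⟩⟩

variable (L E) in
/-- Quotienting by derivability rather than by truth in all models of one universe lets the free
model map to models in every universe. -/
def FreeModel (α : Type*) : Type _ := Quotient (derivableSetoid E α)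

namespace FreeModel

variable {α : Type*}

def mk (t : L.Term α) : FreeModel L E α := Quotient.mk _ t

def of (a : α) : FreeModel L E α := mk (Term.var a)

noncomputable def repr (x : FreeModel L E α) : L.Term α := Quotient.out x

@[simp] theorem mk_repr (x : FreeModel L E α) : mk (repr x) = x := Quotient.out_eq x

noncomputable instance : L.Structure (FreeModel L E α) where
  funMap f x := mk (Term.func f fun i => repr (x i))
  RelMap _ _ := False

theorem funMap_mk {k : ℕ} (f : L.Functions k) (ts : Fin k → L.Term α) :
    Structure.funMap f (fun i => mk (ts i) : Fin k → FreeModel L E α) = mk (Term.func f ts) :=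
  Quotient.sound <| Derivable.func f fun i => Quotient.mk_out (s := derivableSetoid E α) (ts i)

@[simp] theorem realize_of (t : L.Term α) : t.realize (of : α → FreeModel L E α) = mk t := by
  induction t with
  | var => rfl
  | func f ts ih => simp only [Term.realize, ih, funMap_mk]

theorem satisfiesEqs : SatisfiesEqs L E (FreeModel L E α) := by
  intro e he val
  have hval : val = fun n => (repr (val n)).realize of := by simp
  rw [hval, ← Term.realize_subst, ← Term.realize_subst, realize_of, realize_of]
  exact Quotient.sound (Derivable.subst _ he)

variable {M : Type*} [L.Structure M]

noncomputable def lift (hM : SatisfiesEqs L E M) (val : α → M) : FreeModel L E α →[L] M where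
  toFun := Quotient.lift (fun t => t.realize val) fun _ _ h => Derivable.realize_eq h hM val
  map_fun' f x := by
    obtain ⟨ts, rfl⟩ : ∃ ts, x = fun i => mk (ts i) := ⟨fun i => repr (x i), by simp⟩
    rw [funMap_mk]
    rfl
  map_rel' _ _ h := h.elim

theorem lift_apply (hM : SatisfiesEqs L E M) (val : α → M) (x : FreeModel L E α) :
    lift hM val x = (repr x).realize val := by
  conv_lhs => rw [← mk_repr x]
  rfl

theorem realize_relabel_down_repr {β : Type*} (hM : SatisfiesEqs L E M) (val : β → M)
    (x : FreeModel L E (ULift.{v'} β)) :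
    ((repr x).relabel ULift.down).realize val = lift hM (fun a => val a.down) x := by
  rw [Term.realize_relabel, lift_apply]
  rfl

end FreeModel

end Equations

section Hom

variable {M N : Type*} [L.Structure M] [L.Structure N]

def fstHom : M × N →[L] M where
  toFun := Prod.fst
  map_rel' _ _ h := h.1

def sndHom : M × N →[L] N where
  toFun := Prod.snd
  map_rel' _ _ h := h.2

theorem map_realize_cons_cons (φ : M →[L] N) {m : ℕ} (P : L.Term (Fin (m + 2))) (s₀ s₁ : M)
    (q : Fin m → M) :
    φ (P.realize (Fin.cons s₀ (Fin.cons s₁ q))) =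
      P.realize (Fin.cons (φ s₀) (Fin.cons (φ s₁) (φ ∘ q))) := by
  rw [← HomClass.realize_term, Fin.comp_cons, Fin.comp_cons]

end Hom

theorem exists_common_fin_params {β : Type*} {n : ℕ} (t : Fin n → L.Term (Fin 2 ⊕ β)) :
    ∃ (m : ℕ) (g : Fin m → β) (p : Fin n → L.Term (Fin (m + 2))),
      ∀ (i : Fin n) {M : Type*} [L.Structure M] (a b : M) (P : β → M),
        (p i).realize (Fin.cons a (Fin.cons b (P ∘ g))) = (t i).realize (Sum.elim ![a, b] P) := by
  classical
  let S : Finset β := Finset.univ.biUnion fun i => (t i).varFinset.toRight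
  let ρ : Fin 2 ⊕ β → Fin (S.card + 2) := Sum.elim (Fin.castLE (by omega)) fun c =>
    if h : c ∈ S then (S.equivFin ⟨c, h⟩).succ.succ else 0
  refine ⟨S.card, fun j => S.equivFin.symm j, fun i => (t i).restrictVar fun x => ρ x.1, ?_⟩
  intro i M _ a b P
  refine Term.realize_restrictVar _ ?_
  rintro ⟨k | c, hx⟩
  · fin_cases k <;> rfl
  · have hc : c ∈ S := Finset.mem_biUnion.2 ⟨i, Finset.mem_univ _, Finset.mem_toRight.2 hx⟩
    simp [ρ, hc]

section PrincipalCongruence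

variable (L) {G : Type*} [L.Structure G]

/-- Two holes rather than one: `t(u, v, c̄)` and `t(v, u, c̄)` is the shape of the Mal'cev
identities, and it makes the relation symmetric. -/
def PolyStep (u v a b : G) : Prop :=
  ∃ t : L.Term (Fin 2 ⊕ G), t.realize (Sum.elim ![u, v] id) = a ∧
    t.realize (Sum.elim ![v, u] id) = b

abbrev principalCong (u v : G) : G → G → Prop := Relation.TransGen (PolyStep L u v)

variable {L} {u v : G}

theorem polyStep_refl (a : G) : PolyStep L u v a a := ⟨Term.var (Sum.inr a), rfl, rfl⟩

theorem polyStep_self : PolyStep L u v u v := ⟨Term.var (Sum.inl 0), rfl, rfl⟩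

theorem polyStep_symm {a b : G} (h : PolyStep L u v a b) : PolyStep L u v b a := by
  obtain ⟨t, rfl, rfl⟩ := h
  have swap (x y : G) : Sum.elim ![x, y] id ∘ Sum.map ![1, 0] id = Sum.elim ![y, x] id := by
    ext (k | c)
    · fin_cases k <;> rfl
    · rfl
  exact ⟨t.relabel (Sum.map ![1, 0] id), by simp [swap], by simp [swap]⟩

instance : Std.Symm (PolyStep L u v) := ⟨fun _ _ => polyStep_symm⟩

theorem polyStep_funMap {k : ℕ} (f : L.Functions k) {x y : Fin k → G}
    (h : ∀ i, PolyStep L u v (x i) (y i)) :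
    PolyStep L u v (Structure.funMap f x) (Structure.funMap f y) := by
  choose t ht using h
  exact ⟨Term.func f t, congrArg _ (funext fun i => (ht i).1),
    congrArg _ (funext fun i => (ht i).2)⟩

theorem isCongruence_principalCong : IsCongruence L G (principalCong L u v) :=
  ⟨⟨fun a => .single (polyStep_refl a), fun h => symm h, .trans⟩,
    fun f => Relation.transGen_apply_of_forall polyStep_refl _ fun _ _ => polyStep_funMap f⟩

theorem principalCong_self : principalCong L u v u v := .single polyStep_self

def IsPolynomialChain {n m : ℕ} (u v : G) (w : ℕ → G) (g : Fin m → G)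
    (p : Fin n → L.Term (Fin (m + 2))) : Prop :=
  ∀ i : Fin n, (p i).realize (Fin.cons u (Fin.cons v g)) = w i ∧
    (p i).realize (Fin.cons v (Fin.cons u g)) = w (i + 1)

theorem principalCong.exists_polynomial_chain {a b : G} (h : principalCong L u v a b) :
    ∃ (n : ℕ) (w : ℕ → G) (m : ℕ) (g : Fin m → G) (p : Fin n → L.Term (Fin (m + 2))),
      0 < n ∧ w 0 = a ∧ w n = b ∧ IsPolynomialChain u v w g p := by
  obtain ⟨n, hn, w, h0, hn', hw⟩ := h.exists_chain
  choose t ht using fun i : Fin n => hw i i.2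
  obtain ⟨m, g, p, hp⟩ := exists_common_fin_params t
  exact ⟨n, w, m, g, p, hn, h0, hn', fun i =>
    ⟨(hp i u v id).trans (ht i).1, (hp i v u id).trans (ht i).2⟩⟩

variable {n m : ℕ} {w : ℕ → G} {g : Fin m → G} {p : Fin n → L.Term (Fin (m + 2))}

theorem IsPolynomialChain.apply_eq_apply_zero (hp : IsPolynomialChain u v w g p) (huv : u = v) :
    ∀ i ≤ n, w i = w 0 := by
  intro i hi
  induction i with
  | zero => rfl
  | succ i ih =>
    obtain ⟨h₁, h₂⟩ := hp ⟨i, hi⟩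
    rw [← ih (by omega), ← h₁, ← h₂, huv]

theorem IsPolynomialChain.map {N : Type*} [L.Structure N] (hp : IsPolynomialChain u v w g p)
    (φ : G →[L] N) {u' v' : N} {g' : Fin m → N} (hu : φ u = u') (hv : φ v = v')
    (hg : φ ∘ g = g') : IsPolynomialChain u' v' (φ ∘ w) g' p := by
  subst hu hv hg
  intro i
  simp only [Function.comp_apply, ← (hp i).1, ← (hp i).2, map_realize_cons_cons, and_self]

end PrincipalCongruence

end UniversalAlgebra

open UniversalAlgebra in
/-- if in the pointed variety of `L`-algebras axiomatized by `E`
(with unique constant `z`) every congruence `C` on a binary product satisfies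
`(x,0) C (y,0) → (x,a) C (y,a)`, then the variety admits the Mal'tsev terms
`bᵢ`, `cᵢ`, `pᵢ` of Theorem 2.8. -/
theorem stmt10 (L : FirstOrder.Language.{u, v}) (z : L.Constants)
    (E : Set (L.Term ℕ × L.Term ℕ))
    (H : ∀ (A B : Type (max u v)) [L.Structure A] [L.Structure B],
      SatisfiesEqs L E A → SatisfiesEqs L E B →
      ∀ C : A × B → A × B → Prop, IsCongruence L (A × B) C →
      ∀ (x y : A) (a : B),
        C (x, Structure.funMap (z : L.Functions 0) finZeroElim)
          (y, Structure.funMap (z : L.Functions 0) finZeroElim) →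
        C (x, a) (y, a)) :
    ∃ (m n : ℕ) (hn : 0 < n) (b : Fin m → L.Term (Fin 2))
      (c : Fin m → L.Term (Fin 1)) (p : Fin n → L.Term (Fin (m + 2))),
      ∀ (M : Type w) [L.Structure M], SatisfiesEqs L E M →
        (∀ x y : M, (p ⟨0, hn⟩).realize
            (Fin.cons x (Fin.cons y (fun j => (b j).realize ![x, y]))) = x) ∧
        (∀ (i : Fin n) (h : (i : ℕ) + 1 < n) (x y : M),
          (p i).realize (Fin.cons y (Fin.cons x (fun j => (b j).realize ![x, y]))) =
          (p ⟨(i : ℕ) + 1, h⟩).realize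
            (Fin.cons x (Fin.cons y (fun j => (b j).realize ![x, y])))) ∧
        (∀ x y : M, (p ⟨n - 1, Nat.sub_lt hn one_pos⟩).realize
            (Fin.cons y (Fin.cons x (fun j => (b j).realize ![x, y]))) = y) ∧
        (∀ (i : Fin n) (a : M),
          (p i).realize
            (Fin.cons (Structure.funMap (z : L.Functions 0) finZeroElim)
              (Fin.cons (Structure.funMap (z : L.Functions 0) finZeroElim)
                (fun j => (c j).realize ![a]))) = a) := by
  let A := FreeModel L E (ULift.{v} (Fin 2))
  let B := FreeModel L E (ULift.{v} (Fin 1))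
  let x₀ : Fin 2 → A := fun j => FreeModel.of (ULift.up j)
  let z₀ : B := FreeModel.of (ULift.up 0)
  obtain ⟨n, w, m, g, p, hn, hw₀, hwn, hp⟩ :=
    (H A B FreeModel.satisfiesEqs FreeModel.satisfiesEqs _ isCongruence_principalCong
      (x₀ 0) (x₀ 1) z₀ principalCong_self).exists_polynomial_chain
  let b : Fin m → L.Term (Fin 2) := fun j => (g j).1.repr.relabel ULift.down
  let c : Fin m → L.Term (Fin 1) := fun j => (g j).2.repr.relabel ULift.down
  refine ⟨m, n, hn, b, c, p, fun M _ hM => ?_⟩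
  let φ (x y : M) : A →[L] M := FreeModel.lift hM fun i => ![x, y] i.down
  let ψ (a : M) : B →[L] M := FreeModel.lift hM fun i => ![a] i.down
  have hφ (x y : M) : IsPolynomialChain x y ((φ x y).comp fstHom ∘ w)
      (fun j => (b j).realize ![x, y]) p :=
    hp.map _ rfl rfl (funext fun j => (FreeModel.realize_relabel_down_repr hM ..).symm)
  -- `(z : M)` unfolds to the `Structure.funMap z finZeroElim` of the statement.
  have hψ (a : M) : IsPolynomialChain (z : M) (z : M) ((ψ a).comp sndHom ∘ w)
      (fun j => (c j).realize ![a]) p :=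
    hp.map _ ((ψ a).map_constants z) ((ψ a).map_constants z)
      (funext fun j => (FreeModel.realize_relabel_down_repr hM ..).symm)
  refine ⟨fun x y => ?_, fun i h x y => (hφ x y i).2.trans (hφ x y ⟨i + 1, h⟩).1.symm,
    fun x y => ?_, fun i a => (hψ a i).1.trans ?_⟩
  · exact (hφ x y _).1.trans (by rw [Function.comp_apply, hw₀]; rfl)
  · refine (hφ x y _).2.trans ?_
    rw [Function.comp_apply, Fin.val_mk, Nat.sub_one_add_one hn.ne', hwn]
    rfl
  · rw [(hψ a).apply_eq_apply_zero rfl i i.2.le, Function.comp_apply, hw₀]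
    rfl
end

section
/- Let V be a variety of universal algebras admitting binary terms b₁,…,b_m, c₁,…,c_m and (m+2)-ary terms p₀,…,p_n satisfying: p₀(x,y,b₁(x,y),…,b_m(x,y)) = x; p_n(y,x,b₁(x,y),…,b_m(x,y)) = y; p_{i+1}(y,x,b₁(x,y),…,b_m(x,y)) = p_i(x,y,b₁(x,y),…,b_m(x,y)); p_i(u,u,c₁(u,v),…,c_m(u,v)) = v for all i; and b_i(z,z) = c_i(z,z) for all i. Then for any homomorphisms f : A → X and g : B → X, any congruence C on the pullback A ×_X B = {(a,b) : f(a) = g(b)}, and elements x, y ∈ A, u, v ∈ B with (x,u), (y,u), (x,v), (y,v) ∈ A ×_X B: if (x,u) C (y,u) then (x,v) C (y,v). -/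
/-- in a variety with the local-normal-projections Mal'tsev terms
`b₁,…,b_m`, `c₁,…,c_m` (binary) and `p₀,…,p_n`, every congruence `C` on a pullback
`A ×_X B` of homomorphisms `f : A → X`, `g : B → X` satisfies
`(x,u) C (y,u) → (x,v) C (y,v)`.  The terms are interpreted as operations on the
algebras `A`, `B`, `X`; homomorphisms commute with them; the identities hold in `A`
and `B` (being identities of the variety); a congruence on the pullback subalgebra
is an equivalence relation compatible with the componentwise operations. -/
theorem stmt11 {A B X : Type*} {m n : ℕ}
    (bA : Fin m → A → A → A) (cA : Fin m → A → A → A)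
    (pA : Fin (n + 1) → A → A → (Fin m → A) → A)
    (bB : Fin m → B → B → B) (cB : Fin m → B → B → B)
    (pB : Fin (n + 1) → B → B → (Fin m → B) → B)
    (bX : Fin m → X → X → X) (cX : Fin m → X → X → X)
    (pX : Fin (n + 1) → X → X → (Fin m → X) → X)
    (f : A → X) (g : B → X)
    -- `f` and `g` are homomorphisms: they commute with the term operations
    (hfb : ∀ j x y, f (bA j x y) = bX j (f x) (f y))
    (hfc : ∀ j x y, f (cA j x y) = cX j (f x) (f y))
    (hfp : ∀ i x y w, f (pA i x y w) = pX i (f x) (f y) (fun j => f (w j)))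
    (hgb : ∀ j x y, g (bB j x y) = bX j (g x) (g y))
    (hgc : ∀ j x y, g (cB j x y) = cX j (g x) (g y))
    (hgp : ∀ i x y w, g (pB i x y w) = pX i (g x) (g y) (fun j => g (w j)))
    -- the identities, in `A`:
    (hA0 : ∀ x y : A, pA 0 x y (fun j => bA j x y) = x)
    (hAn : ∀ x y : A, pA (Fin.last n) y x (fun j => bA j x y) = y)
    (hAmid : ∀ (i : Fin (n + 1)) (h : (i : ℕ) + 1 < n + 1) (x y : A),
      pA ⟨(i : ℕ) + 1, h⟩ y x (fun j => bA j x y) = pA i x y (fun j => bA j x y))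
    (hAuv : ∀ (i : Fin (n + 1)) (u v : A), pA i u u (fun j => cA j u v) = v)
    (hAbc : ∀ (j : Fin m) (z : A), bA j z z = cA j z z)
    -- the identities, in `B`:
    (hB0 : ∀ x y : B, pB 0 x y (fun j => bB j x y) = x)
    (hBn : ∀ x y : B, pB (Fin.last n) y x (fun j => bB j x y) = y)
    (hBmid : ∀ (i : Fin (n + 1)) (h : (i : ℕ) + 1 < n + 1) (x y : B),
      pB ⟨(i : ℕ) + 1, h⟩ y x (fun j => bB j x y) = pB i x y (fun j => bB j x y))
    (hBuv : ∀ (i : Fin (n + 1)) (u v : B), pB i u u (fun j => cB j u v) = v)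
    (hBbc : ∀ (j : Fin m) (z : B), bB j z z = cB j z z)
    -- `C` is a congruence on the pullback subalgebra `A ×_X B`:
    (C : {ab : A × B // f ab.1 = g ab.2} → {ab : A × B // f ab.1 = g ab.2} → Prop)
    (hC : Equivalence C)
    (hCp : ∀ (i : Fin (n + 1)) (x x' y y' : {ab : A × B // f ab.1 = g ab.2})
      (w w' : Fin m → {ab : A × B // f ab.1 = g ab.2}),
      C x x' → C y y' → (∀ j, C (w j) (w' j)) →
      ∀ (h₁ : f (pA i x.1.1 y.1.1 (fun j => (w j).1.1)) =
              g (pB i x.1.2 y.1.2 (fun j => (w j).1.2)))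
        (h₂ : f (pA i x'.1.1 y'.1.1 (fun j => (w' j).1.1)) =
              g (pB i x'.1.2 y'.1.2 (fun j => (w' j).1.2))),
      C ⟨(pA i x.1.1 y.1.1 (fun j => (w j).1.1),
          pB i x.1.2 y.1.2 (fun j => (w j).1.2)), h₁⟩
        ⟨(pA i x'.1.1 y'.1.1 (fun j => (w' j).1.1),
          pB i x'.1.2 y'.1.2 (fun j => (w' j).1.2)), h₂⟩)
    (hCb : ∀ (j : Fin m) (x x' y y' : {ab : A × B // f ab.1 = g ab.2}),
      C x x' → C y y' →
      ∀ (h₁ : f (bA j x.1.1 y.1.1) = g (bB j x.1.2 y.1.2))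
        (h₂ : f (bA j x'.1.1 y'.1.1) = g (bB j x'.1.2 y'.1.2)),
      C ⟨(bA j x.1.1 y.1.1, bB j x.1.2 y.1.2), h₁⟩
        ⟨(bA j x'.1.1 y'.1.1, bB j x'.1.2 y'.1.2), h₂⟩)
    (hCc : ∀ (j : Fin m) (x x' y y' : {ab : A × B // f ab.1 = g ab.2}),
      C x x' → C y y' →
      ∀ (h₁ : f (cA j x.1.1 y.1.1) = g (cB j x.1.2 y.1.2))
        (h₂ : f (cA j x'.1.1 y'.1.1) = g (cB j x'.1.2 y'.1.2)),
      C ⟨(cA j x.1.1 y.1.1, cB j x.1.2 y.1.2), h₁⟩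
        ⟨(cA j x'.1.1 y'.1.1, cB j x'.1.2 y'.1.2), h₂⟩) :
    ∀ (x y : A) (u v : B) (hxu : f x = g u) (hyu : f y = g u)
      (hxv : f x = g v) (hyv : f y = g v),
      C ⟨(x, u), hxu⟩ ⟨(y, u), hyu⟩ → C ⟨(x, v), hxv⟩ ⟨(y, v), hyv⟩ := by
  intro x y u v hxu hyu hxv hyv hxy
  have huv : g u = g v := hxu.symm.trans hxv
  -- the middle arguments live in the pullback
  have hw : ∀ j : Fin m, f (bA j x y) = g (cB j u v) := by
    intro j
    rw [hfb, hgc, hxu, hyu, ← huv, ← hgb, ← hgc, hBbc]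
  have W : Fin m → {ab : A × B // f ab.1 = g ab.2} := fun j => ⟨(bA j x y, cB j u v), hw j⟩
  -- membership proofs for p-applications
  have hr : ∀ (i : Fin (n+1)) (a a' : A), f a = g u → f a' = g u →
      f (pA i a a' (fun j => bA j x y)) = g (pB i u u (fun j => cB j u v)) := by
    intro i a a' ha ha'
    rw [hfp, hgp, ha, ha']
    congr 1
    funext j
    exact hw j
  have hs : ∀ (i : Fin (n+1)) (a a' : A), f a = g u → f a' = g u →
      f (pA i a a' (fun j => bA j x y)) = g v := by
    intro i a a' ha ha'
    rw [hr i a a' ha ha', hBuv]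
  -- key congruence step
  have key : ∀ i : Fin (n+1),
      C ⟨(pA i x y (fun j => bA j x y), pB i u u (fun j => cB j u v)), hr i x y hxu hyu⟩
        ⟨(pA i y x (fun j => bA j x y), pB i u u (fun j => cB j u v)), hr i y x hyu hxu⟩ := by
    intro i
    exact hCp i ⟨(x,u),hxu⟩ ⟨(y,u),hyu⟩ ⟨(y,u),hyu⟩ ⟨(x,u),hxu⟩
      (fun j => ⟨(bA j x y, cB j u v), hw j⟩) (fun j => ⟨(bA j x y, cB j u v), hw j⟩)
      hxy (hC.symm hxy) (fun j => hC.refl _) _ _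
  -- rewrite the second coordinate to v
  have key' : ∀ i : Fin (n+1),
      C ⟨(pA i x y (fun j => bA j x y), v), hs i x y hxu hyu⟩
        ⟨(pA i y x (fun j => bA j x y), v), hs i y x hyu hxu⟩ := by
    intro i
    have e1 : (⟨(pA i x y (fun j => bA j x y), pB i u u (fun j => cB j u v)), hr i x y hxu hyu⟩ : {ab : A × B // f ab.1 = g ab.2})
        = ⟨(pA i x y (fun j => bA j x y), v), hs i x y hxu hyu⟩ :=
      Subtype.ext (Prod.ext rfl (hBuv i u v))
    have e2 : (⟨(pA i y x (fun j => bA j x y), pB i u u (fun j => cB j u v)), hr i y x hyu hxu⟩ : {ab : A × B // f ab.1 = g ab.2})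
        = ⟨(pA i y x (fun j => bA j x y), v), hs i y x hyu hxu⟩ :=
      Subtype.ext (Prod.ext rfl (hBuv i u v))
    rw [← e1, ← e2]
    exact key i
  -- chain
  have main : ∀ k : ℕ, ∀ hk : k < n + 1,
      C ⟨(x, v), hxv⟩ ⟨(pA ⟨k, hk⟩ y x (fun j => bA j x y), v), hs ⟨k, hk⟩ y x hyu hxu⟩ := by
    intro k
    induction k with
    | zero =>
      intro hk
      have e0 : (⟨(x, v), hxv⟩ : {ab : A × B // f ab.1 = g ab.2})
          = ⟨(pA ⟨0, hk⟩ x y (fun j => bA j x y), v), hs ⟨0, hk⟩ x y hxu hyu⟩ :=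
        Subtype.ext (Prod.ext (hA0 x y).symm rfl)
      rw [e0]
      exact key' ⟨0, hk⟩
    | succ k ih =>
      intro hk
      have hk' : k < n + 1 := Nat.lt_of_succ_lt hk
      have emid : (⟨(pA ⟨k + 1, hk⟩ y x (fun j => bA j x y), v), hs ⟨k+1,hk⟩ y x hyu hxu⟩ : {ab : A × B // f ab.1 = g ab.2})
          = ⟨(pA ⟨k, hk'⟩ x y (fun j => bA j x y), v), hs ⟨k,hk'⟩ x y hxu hyu⟩ :=
        Subtype.ext (Prod.ext (hAmid ⟨k, hk'⟩ hk x y) rfl)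
      rw [emid]
      exact hC.trans (ih hk') (hC.symm (key' ⟨k, hk'⟩))
  have hn : n < n + 1 := Nat.lt_succ_self n
  have efin : (⟨(pA ⟨n, hn⟩ y x (fun j => bA j x y), v), hs ⟨n,hn⟩ y x hyu hxu⟩ : {ab : A × B // f ab.1 = g ab.2})
      = ⟨(y, v), hyv⟩ :=
    Subtype.ext (Prod.ext (hAn x y) rfl)
  have := main n hn
  rw [efin] at this
  exact this
end

section
/- Let V be a variety of universal algebras such that for any two homomorphisms f : A → X, g : B → X, any congruence C on the pullback A ×_X B, and any elements x, y ∈ A, u, v ∈ B with (x,u), (y,u), (x,v), (y,v) ∈ A ×_X B: (x,u) C (y,u) implies (x,v) C (y,v). Then for every object X of V, the category Pt_V(X) of points over X satisfies the 'egg-box' condition: for any effective equivalence relation R on a product P₁ × P₂ in Pt_V(X) and generalized elements with (x, 0) R (y, 0), one has (x, z) R (y, z). -/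
open FirstOrder Language Structure

universe u v w

variable (L : FirstOrder.Language.{u, v})

/-- A congruence on the pullback `A ×_X B` of homomorphisms `f : A → X` and
`g : B → X`: an equivalence relation compatible with the componentwise operations
(which restrict to the pullback). -/
def IsPullbackCongruence {A B X : Type w} [L.Structure A] [L.Structure B]
    [L.Structure X] (f : A →[L] X) (g : B →[L] X)
    (C : {ab : A × B // f ab.1 = g ab.2} → {ab : A × B // f ab.1 = g ab.2} → Prop) :
    Prop :=
  Equivalence C ∧ ∀ {k : ℕ} (F : L.Functions k)
    (x y : Fin k → {ab : A × B // f ab.1 = g ab.2}),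
    (∀ i, C (x i) (y i)) →
    ∀ (h₁ : f (funMap F (fun i => (x i).1.1)) = g (funMap F (fun i => (x i).1.2)))
      (h₂ : f (funMap F (fun i => (y i).1.1)) = g (funMap F (fun i => (y i).1.2))),
    C ⟨(funMap F (fun i => (x i).1.1), funMap F (fun i => (x i).1.2)), h₁⟩
      ⟨(funMap F (fun i => (y i).1.1), funMap F (fun i => (y i).1.2)), h₂⟩

/-- if in the variety axiomatized by `E` every congruence on a
pullback satisfies the shifting condition `(x,u) C (y,u) → (x,v) C (y,v)`, then for
every `X` the category of points `Pt_V(X)` satisfies the egg-box condition: for any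
two points `(A,p,s)`, `(B,q,t)` over `X`, whose product is the pullback `A ×_X B`,
and any effective equivalence relation `R` on that product (the kernel relation of
a morphism `h` of points into some point `(D,d,e)`), if `(x, 0) R (y, 0)` (where
the zero section is `t ∘ p`), then `(x, z) R (y, z)`. -/
theorem stmt17 (E : Set (L.Term ℕ × L.Term ℕ))
    (H : ∀ (A B X : Type w) [L.Structure A] [L.Structure B] [L.Structure X],
      SatisfiesEqs L E A → SatisfiesEqs L E B → SatisfiesEqs L E X →
      ∀ (f : A →[L] X) (g : B →[L] X)
        (C : {ab : A × B // f ab.1 = g ab.2} → {ab : A × B // f ab.1 = g ab.2} → Prop),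
        IsPullbackCongruence L f g C →
        ∀ (x y : A) (u v : B) (hxu : f x = g u) (hyu : f y = g u)
          (hxv : f x = g v) (hyv : f y = g v),
          C ⟨(x, u), hxu⟩ ⟨(y, u), hyu⟩ → C ⟨(x, v), hxv⟩ ⟨(y, v), hyv⟩) :
    ∀ (X A B : Type w) [L.Structure X] [L.Structure A] [L.Structure B],
      SatisfiesEqs L E X → SatisfiesEqs L E A → SatisfiesEqs L E B →
      ∀ (p : A →[L] X) (s : X →[L] A) (_ : ∀ x, p (s x) = x)
        (q : B →[L] X) (t : X →[L] B) (_ : ∀ x, q (t x) = x)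
        (R : {ab : A × B // p ab.1 = q ab.2} → {ab : A × B // p ab.1 = q ab.2} → Prop),
        -- `R` is an effective equivalence relation on the product of the two points
        -- in `Pt_V(X)`: the kernel relation of a morphism of points `h` into some
        -- point `(D, d, e)` over `X`
        (∃ (D : Type w) (_ : L.Structure D), SatisfiesEqs L E D ∧
          ∃ (d : D →[L] X) (e : X →[L] D) (_ : ∀ x, d (e x) = x)
            (h : {ab : A × B // p ab.1 = q ab.2} → D),
            (∀ {k : ℕ} (F : L.Functions k)
              (xs : Fin k → {ab : A × B // p ab.1 = q ab.2})
              (hmem : p (funMap F (fun i => (xs i).1.1)) =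
                      q (funMap F (fun i => (xs i).1.2))),
              h ⟨(funMap F (fun i => (xs i).1.1),
                  funMap F (fun i => (xs i).1.2)), hmem⟩ =
                funMap F (fun i => h (xs i))) ∧
            (∀ ab, d (h ab) = p ab.1.1) ∧
            (∀ (x : X) (hmem : p (s x) = q (t x)), h ⟨(s x, t x), hmem⟩ = e x) ∧
            (∀ ab ab', R ab ab' ↔ h ab = h ab')) →
        ∀ (x y : A) (z : B) (hxy : p x = p y) (hxz : p x = q z)
          (hx0 : p x = q (t (p x))) (hy0 : p y = q (t (p y))) (hyz : p y = q z),
          R ⟨(x, t (p x)), hx0⟩ ⟨(y, t (p y)), hy0⟩ →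
          R ⟨(x, z), hxz⟩ ⟨(y, z), hyz⟩ := by
  intro X A B _ _ _ hX hA hB p s hps q t hqt R hEff x y z hxy hxz hx0 hy0 hyz hR
  obtain ⟨D, _, hD, d, e, hde, h, hcomm, _, _, hker⟩ := hEff
  have hcong : IsPullbackCongruence L p q R := by
    refine ⟨⟨?_, ?_, ?_⟩, ?_⟩
    · intro a; rw [hker]
    · intro a b hab; rw [hker] at *; exact hab.symm
    · intro a b c hab hbc; rw [hker] at *; exact hab.trans hbc
    · intro k F xs ys hxys h₁ h₂
      rw [hker, hcomm F xs h₁, hcomm F ys h₂]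
      congr 1; funext i
      have := hxys i; rw [hker] at this; exact this
  have hy0' : p y = q (t (p x)) := by rw [← hxy]; exact hx0
  refine H A B X hA hB hX p q R hcong x y (t (p x)) z hx0 hy0' hxz hyz ?_
  convert hR using 3
  rw [hxy]
end
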